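/- On ℝ² with r² = x² + y², define the time-independent fields: volume fraction α(x,y) = 1/3 + e^{−r²/2}/(2√(2π)); phase densities ρ1(x,y) = ρ2(x,y) = R(x,y) := (1 − e^{1−r²}/4)^{5/7}; phase velocities u¹ = u² = u with u(x,y) = g(x,y)·(−y, x), where g(x,y) = 2^{3/14} √( e^{1−r²} / (4 − e^{1−r²})^{5/7} ); and relative velocity w = u¹ − u² = 0. Take both phases to be ideal gases with γ = 7/5, i.e. e_j(ρ) = ρ^{2/5}/(2/5) and p_j(ρ) = ρ^{7/5} for j = 1,2. Then these fields are a stationary exact solution of the barotropic two-phase SHTC system with zero gravity: (i) u·∇α = 0; (ii) div(α R u) = 0 and div((1−α) R u) = 0; (iii) the mixture density ρ = α ρ1 + (1−α) ρ2 equals R, the mixture pressure p = α ρ1^{7/5} + (1−α) ρ2^{7/5} equals R^{7/5}, and the steady momentum balance ∂_k(ρ u_i u_k) + ∂_i p = 0 holds for i = 1,2; (iv) φ := μ1 − μ2 − ((c1−c2)/2)|w|² vanishes identically, so the relative velocity equation ∂_k(w_l u_l + φ) + u_l(∂_l w_k − ∂_k w_l) = 0 is satisfied with w = 0. (Note that 4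 − e^{1−r²} > 0 for all r, so all fields are smooth on all of ℝ².) -/

import Mathlib

open Real

noncomputable section

/-- Partial derivative in `x` of a scalar field on `ℝ²`. -/
def px (f : ℝ × ℝ → ℝ) (z : ℝ × ℝ) : ℝ := fderiv ℝ f z (1, 0)

/-- Partial derivative in `y` of a scalar field on `ℝ²`. -/
def py (f : ℝ × ℝ → ℝ) (z : ℝ × ℝ) : ℝ := fderiv ℝ f z (0, 1)

/-- `r² = x² + y²`. -/
def rsq (z : ℝ × ℝ) : ℝ := z.1 ^ 2 + z.2 ^ 2

/-- Volume fraction `α = 1/3 + e^{−r²/2}/(2√(2π))`. -/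
def vortexα (z : ℝ × ℝ) : ℝ := 1 / 3 + exp (-(rsq z) / 2) / (2 * sqrt (2 * π))

/-- Common phase density `ρ1 = ρ2 = R = (1 − e^{1−r²}/4)^{5/7}`. -/
def vortexR (z : ℝ × ℝ) : ℝ := (1 - exp (1 - rsq z) / 4) ^ ((5 : ℝ) / 7)

/-- Angular factor `g = 2^{3/14} √(e^{1−r²}/(4 − e^{1−r²})^{5/7})`. -/
def vortexg (z : ℝ × ℝ) : ℝ :=
  (2 : ℝ) ^ ((3 : ℝ) / 14) * sqrt (exp (1 - rsq z) / (4 - exp (1 - rsq z)) ^ ((5 : ℝ) / 7))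

/-- x-component of the common velocity `u = g·(−y, x)`. -/
def vortexu1 (z : ℝ × ℝ) : ℝ := vortexg z * (-z.2)

/-- y-component of the common velocity `u = g·(−y, x)`. -/
def vortexu2 (z : ℝ × ℝ) : ℝ := vortexg z * z.1

/-- x-component of the relative velocity `w = u¹ − u² = 0` (both phases move with `u`). -/
def vortexw1 (z : ℝ × ℝ) : ℝ := vortexu1 z - vortexu1 z

/-- y-component of the relative velocity `w = u¹ − u² = 0` (both phases move with `u`). -/
def vortexw2 (z : ℝ × ℝ) : ℝ := vortexu2 z - vortexu2 z

/-- Ideal gas (γ = 7/5) specific internal energy `e(ρ) = ρ^{γ−1}/(γ−1)`. -/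
def idealE (ρ : ℝ) : ℝ := ρ ^ ((2 : ℝ) / 5) / ((2 : ℝ) / 5)

/-- Ideal gas (γ = 7/5) pressure `p(ρ) = ρ^γ`. -/
def idealP (ρ : ℝ) : ℝ := ρ ^ ((7 : ℝ) / 5)

/-- Ideal gas chemical potential `μ(ρ) = e(ρ) + p(ρ)/ρ`. -/
def idealμ (ρ : ℝ) : ℝ := idealE ρ + idealP ρ / ρ

/-- Mixture density `ρ = α ρ1 + (1−α) ρ2` of the vortex (with `ρ1 = ρ2 = R`). -/
def vortexρ (z : ℝ × ℝ) : ℝ := vortexα z * vortexR z + (1 - vortexα z) * vortexR z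

/-- Mixture pressure `p = α p1 + (1−α) p2` of the vortex. -/
def vortexp (z : ℝ × ℝ) : ℝ :=
  vortexα z * idealP (vortexR z) + (1 - vortexα z) * idealP (vortexR z)

/-- Mass fraction `c1 = α ρ1 / ρ` of the vortex. -/
def vortexc1 (z : ℝ × ℝ) : ℝ := vortexα z * vortexR z / vortexρ z

/-- Mass fraction `c2 = (1−α) ρ2 / ρ` of the vortex. -/
def vortexc2 (z : ℝ × ℝ) : ℝ := (1 - vortexα z) * vortexR z / vortexρ z

/-- Source potential `φ = μ1 − μ2 − ((c1−c2)/2)|w|²` of the vortex. -/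
def vortexφ (z : ℝ × ℝ) : ℝ :=
  idealμ (vortexR z) - idealμ (vortexR z)
    - ((vortexc1 z - vortexc2 z) / 2) * (vortexw1 z ^ 2 + vortexw2 z ^ 2)

/-! ### Auxiliary lemmas -/

lemma rsq_nonneg (z : ℝ × ℝ) : 0 ≤ rsq z := by
  simp only [rsq]; positivity

lemma hasFDerivAt_rsq (z : ℝ × ℝ) :
    HasFDerivAt rsq ((2*z.1) • ContinuousLinearMap.fst ℝ ℝ ℝ
      + (2*z.2) • ContinuousLinearMap.snd ℝ ℝ ℝ) z := by
  have h1 : HasFDerivAt (fun w : ℝ×ℝ => w.1 * w.1 + w.2 * w.2)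
      ((z.1 • ContinuousLinearMap.fst ℝ ℝ ℝ + z.1 • ContinuousLinearMap.fst ℝ ℝ ℝ)
        + (z.2 • ContinuousLinearMap.snd ℝ ℝ ℝ + z.2 • ContinuousLinearMap.snd ℝ ℝ ℝ)) z :=
    (hasFDerivAt_fst.mul hasFDerivAt_fst).add (hasFDerivAt_snd.mul hasFDerivAt_snd)
  have hfun : rsq = fun w : ℝ×ℝ => w.1*w.1 + w.2*w.2 := by
    funext w; simp [rsq]; ring
  rw [hfun]
  convert h1 using 1
  ext v <;> simp <;> ring

lemma fd_radial_mul {F : ℝ → ℝ} {F' : ℝ} {Q : ℝ×ℝ → ℝ} {LQ : ℝ×ℝ →L[ℝ] ℝ} {z : ℝ×ℝ}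
    (hF : HasDerivAt F F' (rsq z)) (hQ : HasFDerivAt Q LQ z) (v : ℝ×ℝ) :
    fderiv ℝ (fun w => F (rsq w) * Q w) z v
      = (F' * (2*z.1*v.1 + 2*z.2*v.2)) * Q z + F (rsq z) * LQ v := by
  have hc : HasFDerivAt (fun w => F (rsq w)) (F' • ((2*z.1) • ContinuousLinearMap.fst ℝ ℝ ℝ
      + (2*z.2) • ContinuousLinearMap.snd ℝ ℝ ℝ)) z :=
    hF.comp_hasFDerivAt z (hasFDerivAt_rsq z)
  have h := hc.mul hQ
  rw [show (fun w => F (rsq w) * Q w) = (fun w => F (rsq w)) * Q from rfl, h.fderiv]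
  simp
  ring

lemma fd_radial {F : ℝ → ℝ} {F' : ℝ} {z : ℝ×ℝ}
    (hF : HasDerivAt F F' (rsq z)) (v : ℝ×ℝ) :
    fderiv ℝ (fun w => F (rsq w)) z v = F' * (2*z.1*v.1 + 2*z.2*v.2) := by
  have hc : HasFDerivAt (fun w => F (rsq w)) (F' • ((2*z.1) • ContinuousLinearMap.fst ℝ ℝ ℝ
      + (2*z.2) • ContinuousLinearMap.snd ℝ ℝ ℝ)) z :=
    hF.comp_hasFDerivAt z (hasFDerivAt_rsq z)
  rw [hc.fderiv]
  simp
  ring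

lemma px_rad (F : ℝ → ℝ) (F' : ℝ) (f : ℝ×ℝ → ℝ) {z : ℝ×ℝ}
    (hfun : ∀ w, f w = F (rsq w)) (hF : HasDerivAt F F' (rsq z)) :
    px f z = F' * (2*z.1) := by
  have hf : f = fun w => F (rsq w) := funext hfun
  rw [px, hf]
  simpa using fd_radial hF ((1:ℝ),(0:ℝ))

lemma py_rad (F : ℝ → ℝ) (F' : ℝ) (f : ℝ×ℝ → ℝ) {z : ℝ×ℝ}
    (hfun : ∀ w, f w = F (rsq w)) (hF : HasDerivAt F F' (rsq z)) :
    py f z = F' * (2*z.2) := by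
  have hf : f = fun w => F (rsq w) := funext hfun
  rw [py, hf]
  simpa using fd_radial hF ((0:ℝ),(1:ℝ))

lemma px_rmul (F : ℝ → ℝ) (F' : ℝ) (Q : ℝ×ℝ → ℝ) (LQ : ℝ×ℝ →L[ℝ] ℝ) (f : ℝ×ℝ → ℝ) {z : ℝ×ℝ}
    (hfun : ∀ w, f w = F (rsq w) * Q w)
    (hF : HasDerivAt F F' (rsq z)) (hQ : HasFDerivAt Q LQ z) :
    px f z = F' * (2*z.1) * Q z + F (rsq z) * LQ (1,0) := by
  have hf : f = fun w => F (rsq w) * Q w := funext hfun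
  rw [px, hf]
  simpa using fd_radial_mul hF hQ ((1:ℝ),(0:ℝ))

lemma py_rmul (F : ℝ → ℝ) (F' : ℝ) (Q : ℝ×ℝ → ℝ) (LQ : ℝ×ℝ →L[ℝ] ℝ) (f : ℝ×ℝ → ℝ) {z : ℝ×ℝ}
    (hfun : ∀ w, f w = F (rsq w) * Q w)
    (hF : HasDerivAt F F' (rsq z)) (hQ : HasFDerivAt Q LQ z) :
    py f z = F' * (2*z.2) * Q z + F (rsq z) * LQ (0,1) := by
  have hf : f = fun w => F (rsq w) * Q w := funext hfun
  rw [py, hf]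
  simpa using fd_radial_mul hF hQ ((0:ℝ),(1:ℝ))

/-! scalar profiles -/

def Af (t : ℝ) : ℝ := 1 / 3 + exp (-t / 2) / (2 * sqrt (2 * π))
def Rf (t : ℝ) : ℝ := (1 - exp (1 - t) / 4) ^ ((5 : ℝ) / 7)
def gf (t : ℝ) : ℝ := (2 : ℝ) ^ ((3 : ℝ) / 14) * sqrt (exp (1 - t) / (4 - exp (1 - t)) ^ ((5 : ℝ) / 7))
def Pf (t : ℝ) : ℝ := 1 - exp (1 - t) / 4
def Hf (t : ℝ) : ℝ := exp (1 - t) / 2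

lemma hd_exp1 (s : ℝ) : HasDerivAt (fun t => Real.exp (1 - t)) (-Real.exp (1 - s)) s := by
  have h1 : HasDerivAt (fun t : ℝ => 1 - t) (-1) s := by
    simpa using (hasDerivAt_id s).const_sub 1
  exact ((Real.hasDerivAt_exp (1 - s)).comp s h1).congr_deriv (by ring)

lemma exp1_lt_four {s : ℝ} (hs : 0 ≤ s) : Real.exp (1 - s) < 4 := by
  have h1 : Real.exp (1 - s) ≤ Real.exp 1 := Real.exp_le_exp.mpr (by linarith)
  have := Real.exp_one_lt_d9
  linarith

lemma hd_Pf (s : ℝ) : HasDerivAt Pf (Real.exp (1 - s) / 4) s := by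
  have h := ((hd_exp1 s).div_const 4).const_sub 1
  exact h.congr_deriv (by ring)

lemma hd_Hf (s : ℝ) : HasDerivAt Hf (-Real.exp (1 - s) / 2) s := (hd_exp1 s).div_const 2

lemma hd_negHf (s : ℝ) : HasDerivAt (fun t => -Hf t) (Real.exp (1 - s) / 2) s := by
  have h := (hd_Hf s).neg
  exact h.congr_deriv (by ring)

lemma hd_A (s : ℝ) : ∃ d, HasDerivAt Af d s := by
  have h1 : HasDerivAt (fun t : ℝ => -t / 2) (-(1:ℝ)/2) s := by
    simpa using ((hasDerivAt_id s).neg.div_const 2)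
  have h2 := (Real.hasDerivAt_exp (-s/2)).comp s h1
  exact ⟨_, ((h2.div_const (2 * Real.sqrt (2 * π))).const_add (1/3))⟩

lemma hd_Rf {s : ℝ} (hs : 0 ≤ s) : ∃ d, HasDerivAt Rf d s := by
  have hb : (0:ℝ) < 1 - Real.exp (1 - s) / 4 := by
    have := exp1_lt_four hs; linarith
  exact ⟨_, (hd_Pf s).rpow_const (Or.inl hb.ne')⟩

lemma hd_gf {s : ℝ} (hs : 0 ≤ s) : ∃ d, HasDerivAt gf d s := by
  have hD : (0:ℝ) < 4 - Real.exp (1 - s) := by have := exp1_lt_four hs; linarith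
  have hDr : (0:ℝ) < (4 - Real.exp (1 - s)) ^ ((5:ℝ)/7) := Real.rpow_pos_of_pos hD _
  have h4 : HasDerivAt (fun t => 4 - Real.exp (1 - t)) (Real.exp (1 - s)) s := by
    simpa using (hd_exp1 s).const_sub 4
  have hDen := h4.rpow_const (p := (5:ℝ)/7) (Or.inl hD.ne')
  have hq := (hd_exp1 s).div hDen hDr.ne'
  have hqpos : (0:ℝ) < Real.exp (1 - s) / (4 - Real.exp (1 - s)) ^ ((5:ℝ)/7) :=
    div_pos (Real.exp_pos _) hDr
  exact ⟨_, (hq.sqrt hqpos.ne').const_mul _⟩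

lemma Rg_sq {s : ℝ} (hs : 0 ≤ s) :
    (1 - Real.exp (1 - s) / 4) ^ ((5:ℝ)/7) *
      ((2:ℝ) ^ ((3:ℝ)/14) * Real.sqrt (Real.exp (1 - s) / (4 - Real.exp (1 - s)) ^ ((5:ℝ)/7))) ^ 2
      = Real.exp (1 - s) / 2 := by
  set E := Real.exp (1 - s) with hE
  have hEpos : 0 < E := Real.exp_pos _
  have hD : (0:ℝ) < 4 - E := by have := exp1_lt_four hs; linarith
  have hDr : (0:ℝ) < (4 - E) ^ ((5:ℝ)/7) := Real.rpow_pos_of_pos hD _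
  have hq : (0:ℝ) ≤ E / (4 - E) ^ ((5:ℝ)/7) := le_of_lt (div_pos hEpos hDr)
  rw [mul_pow, Real.sq_sqrt hq]
  have hc : ((2:ℝ) ^ ((3:ℝ)/14)) ^ 2 = (2:ℝ) ^ ((3:ℝ)/7) := by
    rw [← Real.rpow_natCast ((2:ℝ) ^ ((3:ℝ)/14)) 2, ← Real.rpow_mul (by norm_num)]
    norm_num
  rw [hc]
  have hR : (1 - E / 4) ^ ((5:ℝ)/7) = (4 - E) ^ ((5:ℝ)/7) / 4 ^ ((5:ℝ)/7) := by
    rw [show (1 - E/4) = (4 - E)/4 by ring, Real.div_rpow hD.le (by norm_num)]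
  rw [hR]
  have h4 : (4:ℝ) ^ ((5:ℝ)/7) = 2 ^ ((10:ℝ)/7) := by
    rw [show (4:ℝ) = 2 ^ (2:ℕ) by norm_num, ← Real.rpow_natCast 2 2,
      ← Real.rpow_mul (by norm_num)]
    norm_num
  have h2 : (2:ℝ) ^ ((3:ℝ)/7) / 2 ^ ((10:ℝ)/7) = 1/2 := by
    rw [← Real.rpow_sub (by norm_num)]
    norm_num [Real.rpow_neg_one]
  rw [h4]
  have h2' : (2:ℝ) ^ ((3:ℝ)/7) * 2 = 2 ^ ((10:ℝ)/7) := by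
    field_simp at h2; linarith
  field_simp
  linear_combination h2'

lemma Rg_sq' (w : ℝ × ℝ) : vortexR w * vortexg w ^ 2 = Real.exp (1 - rsq w) / 2 :=
  Rg_sq (rsq_nonneg w)

lemma R_pow (w : ℝ × ℝ) : idealP (vortexR w) = 1 - Real.exp (1 - rsq w) / 4 := by
  have hb : (0:ℝ) ≤ 1 - Real.exp (1 - rsq w) / 4 := by
    have := exp1_lt_four (rsq_nonneg w); linarith
  simp only [idealP, vortexR]
  rw [← Real.rpow_mul hb]
  norm_num

lemma phi0 (w : ℝ × ℝ) : vortexφ w = 0 := by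
  simp [vortexφ, vortexw1, vortexw2]

/-- The stationary vortex fields form an exact time-independent solution of the
barotropic two-phase SHTC system (zero gravity, two space dimensions, ideal gas
equation of state with `γ = 7/5` in both phases). -/
theorem stationary_vortex_exact_solution :
    ∀ z : ℝ × ℝ,
      -- (i) transport of the volume fraction: u · ∇α = 0
      (vortexu1 z * px vortexα z + vortexu2 z * py vortexα z = 0) ∧
      -- (ii) mass conservation of the two phases
      (px (fun z => vortexα z * vortexR z * vortexu1 z) z
        + py (fun z => vortexα z * vortexR z * vortexu2 z) z = 0) ∧
      (px (fun z => (1 - vortexα z) * vortexR z * vortexu1 z) z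
        + py (fun z => (1 - vortexα z) * vortexR z * vortexu2 z) z = 0) ∧
      -- (iii) mixture density, mixture pressure and steady momentum balance
      (vortexρ z = vortexR z) ∧
      (vortexp z = vortexR z ^ ((7 : ℝ) / 5)) ∧
      (px (fun z => vortexρ z * vortexu1 z * vortexu1 z) z
        + py (fun z => vortexρ z * vortexu1 z * vortexu2 z) z
        + px vortexp z = 0) ∧
      (px (fun z => vortexρ z * vortexu2 z * vortexu1 z) z
        + py (fun z => vortexρ z * vortexu2 z * vortexu2 z) z
        + py vortexp z = 0) ∧
      -- (iv) the source potential vanishes and the relative velocity equation holds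
      (vortexφ z = 0) ∧
      (px (fun z => vortexw1 z * vortexu1 z + vortexw2 z * vortexu2 z + vortexφ z) z
        + (vortexu1 z * (px vortexw1 z - px vortexw1 z)
          + vortexu2 z * (py vortexw1 z - px vortexw2 z)) = 0) ∧
      (py (fun z => vortexw1 z * vortexu1 z + vortexw2 z * vortexu2 z + vortexφ z) z
        + (vortexu1 z * (px vortexw2 z - py vortexw1 z)
          + vortexu2 z * (py vortexw2 z - py vortexw2 z)) = 0) ∧
      -- smoothness remark: 4 − e^{1−r²} > 0 everywhere
      (0 < 4 - exp (1 - rsq z)) := by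
  intro z
  have hs : 0 ≤ rsq z := rsq_nonneg z
  obtain ⟨a, hA⟩ := hd_A (rsq z)
  obtain ⟨r', hR'⟩ := hd_Rf hs
  obtain ⟨g', hG⟩ := hd_gf hs
  have hw1 : vortexw1 = fun _ : ℝ × ℝ => (0:ℝ) := funext fun w => sub_self _
  have hw2 : vortexw2 = fun _ : ℝ × ℝ => (0:ℝ) := funext fun w => sub_self _
  refine ⟨?_, ?_, ?_, ?_, ?_, ?_, ?_, phi0 z, ?_, ?_, ?_⟩
  · -- (i)
    have h1 : px vortexα z = a * (2*z.1) := px_rad Af a vortexα (fun w => rfl) hA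
    have h2 : py vortexα z = a * (2*z.2) := py_rad Af a vortexα (fun w => rfl) hA
    rw [h1, h2, vortexu1, vortexu2]
    ring
  · -- (ii) phase 1
    have hF := (hA.mul hR').mul hG
    have h1 := px_rmul (fun t => Af t * Rf t * gf t) _ (fun w => -w.2) _
      (fun z => vortexα z * vortexR z * vortexu1 z)
      (fun w => by simp only [vortexα, vortexR, vortexu1, vortexg, Af, Rf, gf]; ring)
      hF hasFDerivAt_snd.neg
    have h2 := py_rmul (fun t => Af t * Rf t * gf t) _ (fun w => w.1) _
      (fun z => vortexα z * vortexR z * vortexu2 z)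
      (fun w => by simp only [vortexα, vortexR, vortexu2, vortexg, Af, Rf, gf]; ring)
      hF hasFDerivAt_fst
    simp only [ContinuousLinearMap.neg_apply, ContinuousLinearMap.coe_fst',
      ContinuousLinearMap.coe_snd'] at h1 h2
    rw [h1, h2]
    ring
  · -- (ii) phase 2
    have hF := ((hA.const_sub 1).mul hR').mul hG
    have h1 := px_rmul (fun t => (1 - Af t) * Rf t * gf t) _ (fun w => -w.2) _
      (fun z => (1 - vortexα z) * vortexR z * vortexu1 z)
      (fun w => by simp only [vortexα, vortexR, vortexu1, vortexg, Af, Rf, gf]; ring)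
      hF hasFDerivAt_snd.neg
    have h2 := py_rmul (fun t => (1 - Af t) * Rf t * gf t) _ (fun w => w.1) _
      (fun z => (1 - vortexα z) * vortexR z * vortexu2 z)
      (fun w => by simp only [vortexα, vortexR, vortexu2, vortexg, Af, Rf, gf]; ring)
      hF hasFDerivAt_fst
    simp only [ContinuousLinearMap.neg_apply, ContinuousLinearMap.coe_fst',
      ContinuousLinearMap.coe_snd'] at h1 h2
    rw [h1, h2]
    ring
  · -- mixture density
    simp only [vortexρ]; ring
  · -- mixture pressure
    simp only [vortexp, idealP]; ring
  · -- x momentum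
    have h1 := px_rmul Hf (-Real.exp (1 - rsq z)/2) (fun w => w.2*w.2) _
      (fun z => vortexρ z * vortexu1 z * vortexu1 z)
      (fun w => by
        simp only [vortexρ, vortexu1, Hf]
        linear_combination (w.2*w.2) * Rg_sq' w)
      (hd_Hf (rsq z)) (hasFDerivAt_snd.mul hasFDerivAt_snd)
    have h2 := py_rmul (fun t => -Hf t) (Real.exp (1 - rsq z)/2) (fun w => w.1*w.2) _
      (fun z => vortexρ z * vortexu1 z * vortexu2 z)
      (fun w => by
        simp only [vortexρ, vortexu1, vortexu2, Hf]
        linear_combination (-(w.1*w.2)) * Rg_sq' w)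
      (hd_negHf (rsq z)) (hasFDerivAt_fst.mul hasFDerivAt_snd)
    have h3 : px vortexp z = (Real.exp (1 - rsq z)/4) * (2*z.1) :=
      px_rad Pf _ vortexp (fun w => by
        simp only [vortexp, Pf]
        linear_combination R_pow w) (hd_Pf (rsq z))
    simp only [ContinuousLinearMap.add_apply, ContinuousLinearMap.smul_apply,
      ContinuousLinearMap.coe_fst', ContinuousLinearMap.coe_snd', smul_eq_mul] at h1 h2
    rw [h1, h2, h3]
    simp only [Hf]
    ring
  · -- y momentum
    have h1 := px_rmul (fun t => -Hf t) (Real.exp (1 - rsq z)/2) (fun w => w.1*w.2) _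
      (fun z => vortexρ z * vortexu2 z * vortexu1 z)
      (fun w => by
        simp only [vortexρ, vortexu1, vortexu2, Hf]
        linear_combination (-(w.1*w.2)) * Rg_sq' w)
      (hd_negHf (rsq z)) (hasFDerivAt_fst.mul hasFDerivAt_snd)
    have h2 := py_rmul Hf (-Real.exp (1 - rsq z)/2) (fun w => w.1*w.1) _
      (fun z => vortexρ z * vortexu2 z * vortexu2 z)
      (fun w => by
        simp only [vortexρ, vortexu2, Hf]
        linear_combination (w.1*w.1) * Rg_sq' w)
      (hd_Hf (rsq z)) (hasFDerivAt_fst.mul hasFDerivAt_fst)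
    have h3 : py vortexp z = (Real.exp (1 - rsq z)/4) * (2*z.2) :=
      py_rad Pf _ vortexp (fun w => by
        simp only [vortexp, Pf]
        linear_combination R_pow w) (hd_Pf (rsq z))
    simp only [ContinuousLinearMap.add_apply, ContinuousLinearMap.smul_apply,
      ContinuousLinearMap.coe_fst', ContinuousLinearMap.coe_snd', smul_eq_mul] at h1 h2
    rw [h1, h2, h3]
    simp only [Hf]
    ring
  · -- relative velocity eq, x
    have hzero : (fun z => vortexw1 z * vortexu1 z + vortexw2 z * vortexu2 z + vortexφ z)
        = fun _ : ℝ × ℝ => (0:ℝ) := by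
      funext w; simp [vortexw1, vortexw2, phi0 w]
    rw [hzero, hw1, hw2]
    simp [px, py]
  · -- relative velocity eq, y
    have hzero : (fun z => vortexw1 z * vortexu1 z + vortexw2 z * vortexu2 z + vortexφ z)
        = fun _ : ℝ × ℝ => (0:ℝ) := by
      funext w; simp [vortexw1, vortexw2, phi0 w]
    rw [hzero, hw1, hw2]
    simp [px, py]
  · -- positivity
    have := exp1_lt_four hs
    linarith

end
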